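/- arXiv:2506.10227 — 6 statements merged into one kernel-verified Lean document; each statement's English description precedes it below -/
import Mathlib

section
/- Let c be a positive integer and let G be a finite triangle-free graph with χ(G) > 2c + 1. Then there is an r-leveling (L_0, …, L_r) in G for some integer r ≥ 3 such that the subgraph induced on L_r has chromatic number exactly c + 1 and is both non-degenerate and liberal. -/
open SimpleGraph

/-- A `4`-sunspot in `G`: seven pairwise distinct vertices whose induced edge set is exactly
`{x₁x₂, x₂x₃, x₃x₄, x₄x₁, x₁y₁, x₂y₂, x₃y₃}`. -/
def IsFourSunspot {V : Type} (G : SimpleGraph V) (x₁ x₂ x₃ x₄ y₁ y₂ y₃ : V) : Prop :=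
  [x₁, x₂, x₃, x₄, y₁, y₂, y₃].Nodup ∧
  G.Adj x₁ x₂ ∧ G.Adj x₂ x₃ ∧ G.Adj x₃ x₄ ∧ G.Adj x₄ x₁ ∧
  G.Adj x₁ y₁ ∧ G.Adj x₂ y₂ ∧ G.Adj x₃ y₃ ∧
  ¬ G.Adj x₁ x₃ ∧ ¬ G.Adj x₂ x₄ ∧
  ¬ G.Adj x₁ y₂ ∧ ¬ G.Adj x₁ y₃ ∧ ¬ G.Adj x₂ y₁ ∧ ¬ G.Adj x₂ y₃ ∧
  ¬ G.Adj x₃ y₁ ∧ ¬ G.Adj x₃ y₂ ∧ ¬ G.Adj x₄ y₁ ∧ ¬ G.Adj x₄ y₂ ∧ ¬ G.Adj x₄ y₃ ∧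
  ¬ G.Adj y₁ y₂ ∧ ¬ G.Adj y₁ y₃ ∧ ¬ G.Adj y₂ y₃

/-- `G` is `4`-sunspot-free if there is no `4`-sunspot in `G`. -/
def FourSunspotFree {V : Type} (G : SimpleGraph V) : Prop :=
  ∀ x₁ x₂ x₃ x₄ y₁ y₂ y₃ : V, ¬ IsFourSunspot G x₁ x₂ x₃ x₄ y₁ y₂ y₃

/-- The `t`-sun: a `t`-vertex cycle (on `Sum.inl` vertices) together with a pendant
(degree-one) neighbor `Sum.inr i` for each cycle vertex `Sum.inl i`. -/
def Sun (t : ℕ) : SimpleGraph (ZMod t ⊕ ZMod t) :=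
  SimpleGraph.fromEdgeSet
    ((Set.range fun i : ZMod t => s(Sum.inl i, Sum.inl (i + 1))) ∪
     (Set.range fun i : ZMod t => s(Sum.inl i, Sum.inr i)))

/-- `G` is `t`-sun-free: no induced subgraph of `G` is a `t`-sun. -/
def SunFree (t : ℕ) {V : Type} (G : SimpleGraph V) : Prop :=
  IsEmpty (Sun t ↪g G)

/-- The bull: a triangle `0,1,2` with pendant vertices `3` (adjacent to `0`)
and `4` (adjacent to `1`). -/
def Bull : SimpleGraph (Fin 5) :=
  SimpleGraph.fromEdgeSet {s(0, 1), s(1, 2), s(0, 2), s(0, 3), s(1, 4)}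

/-- `G` is bull-free: no induced subgraph of `G` is a bull. -/
def BullFree {V : Type} (G : SimpleGraph V) : Prop :=
  IsEmpty (Bull ↪g G)

/-- A hole in `G`: an induced cycle on at least `4` vertices, given as a graph embedding
of the cycle graph. -/
structure Hole {V : Type} (G : SimpleGraph V) where
  len : ℕ
  four_le : 4 ≤ len
  emb : SimpleGraph.cycleGraph len ↪g G

/-- The vertex set of a hole. -/
def Hole.verts {V : Type} {G : SimpleGraph V} (H : Hole G) : Set V :=
  Set.range H.emb

/-- The edge set of a hole. -/
def Hole.edges {V : Type} {G : SimpleGraph V} (H : Hole G) : Set (Sym2 V) :=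
  {e | ∃ i j : Fin H.len, (SimpleGraph.cycleGraph H.len).Adj i j ∧ e = s(H.emb i, H.emb j)}

/-- `G` is liberal: for distinct non-adjacent `x, y`, neither dominates the other. -/
def Liberal {V : Type} (G : SimpleGraph V) : Prop :=
  ∀ x y : V, x ≠ y → ¬ G.Adj x y →
    (G.neighborSet x \ G.neighborSet y).Nonempty ∧
    (G.neighborSet y \ G.neighborSet x).Nonempty

/-- `G` is non-degenerate: every vertex has degree at least `χ(G) - 1`. -/
def NonDegenerate {V : Type} (G : SimpleGraph V) : Prop :=
  ∀ v : V, G.chromaticNumber ≤ ((G.neighborSet v).ncard : ℕ∞) + 1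

/-- `G` is flapless: for every hole `H` of length at least `6` in `G`, there is no `H`-flap,
i.e. no `4`-hole sharing an edge with `H`. -/
def Flapless {V : Type} (G : SimpleGraph V) : Prop :=
  ∀ H : Hole G, 6 ≤ H.len → ∀ F : Hole G, F.len = 4 → ∀ e ∈ F.edges, e ∉ H.edges

/-- An `r`-leveling in `G`: pairwise disjoint nonempty sets `L 0, …, L r` such that every
vertex of `L i` (`i ≥ 1`) has a neighbor in `L (i-1)`, and edges only join consecutive levels. -/
def IsLeveling {V : Type} (G : SimpleGraph V) (r : ℕ) (L : ℕ → Set V) : Prop :=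
  (∀ i, i ≤ r → (L i).Nonempty) ∧
  (∀ i j, i ≤ r → j ≤ r → i ≠ j → Disjoint (L i) (L j)) ∧
  (∀ i, 1 ≤ i → i ≤ r → ∀ v ∈ L i, ∃ u ∈ L (i - 1), G.Adj u v) ∧
  (∀ i j, i ≤ r → j ≤ r → i ≠ j →
    ∀ u ∈ L i, ∀ v ∈ L j, G.Adj u v → i = j + 1 ∨ j = i + 1)

/-- `x` has no sector of length at most `2` in the hole `H`: there is no edge of `H` with both
ends adjacent to `x`, and no path of length `2` in `H` whose ends are adjacent to `x` and whose
middle vertex is not. -/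
def NoSectorLenLe2 {V : Type} (G : SimpleGraph V) (H : Hole G) (x : V) : Prop :=
  (∀ i j : Fin H.len, (SimpleGraph.cycleGraph H.len).Adj i j →
      ¬ (G.Adj x (H.emb i) ∧ G.Adj x (H.emb j))) ∧
  (∀ i j k : Fin H.len, (SimpleGraph.cycleGraph H.len).Adj i j →
      (SimpleGraph.cycleGraph H.len).Adj j k → i ≠ k →
      ¬ (G.Adj x (H.emb i) ∧ ¬ G.Adj x (H.emb j) ∧ G.Adj x (H.emb k)))

/-- `X` and `Y` are anticomplete in `G`: disjoint, with no edge between them. -/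
def Anticomplete {V : Type} (G : SimpleGraph V) (X Y : Set V) : Prop :=
  Disjoint X Y ∧ ∀ x ∈ X, ∀ y ∈ Y, ¬ G.Adj x y

/-- An `H`-flare in `G`: to each vertex `H.emb i` of the hole `H`, assign a set `Φ i` of at
most one vertex, contained in the neighborhood of `H.emb i` and disjoint from `H`. -/
structure IsFlare {V : Type} (G : SimpleGraph V) (H : Hole G) (Φ : Fin H.len → Set V) : Prop where
  subset_nbhd : ∀ i, Φ i ⊆ G.neighborSet (H.emb i) \ H.verts
  subsingleton : ∀ i, (Φ i).Subsingleton

/-- A flare is full if `|Φ i| = 1` for every `i`. -/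
def IsFullFlare {V : Type} (G : SimpleGraph V) (H : Hole G) (Φ : Fin H.len → Set V) : Prop :=
  IsFlare G H Φ ∧ ∀ i, (Φ i).Nonempty

/-- A flare `Φ` is `d`-safe: for distinct hole vertices at distance at most `d` in `H`,
`Φ(h)` and `Φ[h'] = Φ(h') ∪ {h'}` are anticomplete in `G`. -/
def DSafe {V : Type} (G : SimpleGraph V) (H : Hole G) (Φ : Fin H.len → Set V) (d : ℕ) : Prop :=
  ∀ i j : Fin H.len, i ≠ j → (SimpleGraph.cycleGraph H.len).dist i j ≤ d →
    Anticomplete G (Φ i) (Φ j ∪ {H.emb j})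

/-! Choose a component of `G` that is not `(2c+1)`-colourable and a vertex `v` in it, and split
the component into the layers of vertices at distance `i` from `v`. Edges join only equal or
consecutive layers, and layer `1` is stable because `G` is triangle-free; so if layer `2` were
`(c+1)`-colourable and every layer `i ≥ 3` were `c`-colourable, colouring even and odd layers
from disjoint palettes would use `2c+1` colours. Hence either some layer `i ≥ 3` is not
`c`-colourable, or layer `2` is not `(c+1)`-colourable and stays non-`c`-colourable after deleting
the (stable) neighbourhood of a vertex `u` of layer `1`. In both cases a minimal
non-`c`-colourable set `T` of that layer is the top of a `3`-leveling (the three preceding layers,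
resp. `{u}`, `{v}` and the neighbours of `v` adjacent to `T`). Minimality makes `χ(G[T]) = c + 1`,
forces every vertex of `G[T]` to see all `c` colours of a colouring of the rest, and rules out a
vertex whose neighbourhood is contained in that of a non-neighbour, which could copy its colour. -/

namespace SimpleGraph

section Coloring

variable {V : Type*} {G : SimpleGraph V} {s t : Set V} {m n : ℕ}

theorem Colorable.induce_of_subset (hst : s ⊆ t) (ht : (G.induce t).Colorable n) :
    (G.induce s).Colorable n :=
  ht.of_hom (G.induceHomOfLE hst).toHom

theorem nonempty_of_not_colorable_induce (h : ¬(G.induce s).Colorable n) : s.Nonempty := by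
  by_contra hs
  rw [Set.not_nonempty_iff_eq_empty] at hs
  subst hs
  exact h (.of_isEmpty n)

theorem IsIndepSet.colorable_induce (hs : G.IsIndepSet s) (hn : 0 < n) :
    (G.induce s).Colorable n :=
  ⟨Coloring.mk (fun _ ↦ ⟨0, hn⟩) fun {x y} hxy ↦
    (hs x.2 y.2 (fun h ↦ hxy.ne (Subtype.ext h)) hxy).elim⟩

theorem colorable_induce_union (hs : (G.induce s).Colorable m) (ht : (G.induce t).Colorable n) :
    (G.induce (s ∪ t)).Colorable (m + n) := by
  classical
  obtain ⟨f⟩ := hs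
  obtain ⟨g⟩ := ht
  let C : (G.induce (s ∪ t)).Coloring (Fin m ⊕ Fin n) := Coloring.mk
    (fun z ↦ if hz : z.1 ∈ s then .inl (f ⟨z, hz⟩) else .inr (g ⟨z, z.2.resolve_left hz⟩))
    (by
      rintro ⟨x, hx⟩ ⟨y, hy⟩ hxy
      by_cases hxs : x ∈ s <;> by_cases hys : y ∈ s <;> simp [hxs, hys]
      · exact f.valid hxy
      · exact g.valid hxy)
  simpa using C.colorable

theorem colorable_induce_iUnion {ι : Type*} {s : ι → Set V}
    (hs : ∀ i, (G.induce (s i)).Colorable n)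
    (hsep : ∀ i j, i ≠ j → ∀ x ∈ s i, ∀ y ∈ s j, ¬G.Adj x y) :
    (G.induce (⋃ i, s i)).Colorable n := by
  choose idx hidx using fun z : ↥(⋃ i, s i) ↦ Set.mem_iUnion.mp z.2
  have hcongr : ∀ i j (h : i = j) (x : V) (hi : x ∈ s i) (hj : x ∈ s j),
      (hs j).some ⟨x, hj⟩ = (hs i).some ⟨x, hi⟩ := by
    rintro i _ rfl x _ _
    rfl
  refine ⟨Coloring.mk (fun z ↦ (hs (idx z)).some ⟨z, hidx z⟩) fun {x y} hxy ↦ ?_⟩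
  have hidx_eq : idx x = idx y := by
    by_contra hne
    exact hsep _ _ hne _ (hidx x) _ (hidx y) hxy
  rw [hcongr _ _ hidx_eq y (hidx_eq ▸ hidx y) (hidx y)]
  exact (hs (idx x)).some.valid hxy

theorem colorable_induce_of_forall_adj_ne {x : V} (f : (G.induce (s \ {x})).Coloring (Fin n))
    (κ : Fin n) (hκ : ∀ y (hy : y ∈ s \ {x}), G.Adj x y → f ⟨y, hy⟩ ≠ κ) :
    (G.induce s).Colorable n := by
  classical
  refine ⟨Coloring.mk (fun z ↦ if hz : z.1 = x then κ else f ⟨z, z.2, hz⟩) ?_⟩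
  rintro ⟨y, hy⟩ ⟨z, hz⟩ hyz
  have hyz : G.Adj y z := hyz
  by_cases hyx : y = x <;> by_cases hzx : z = x <;> simp only [hyx, hzx, dite_true, dite_false]
  · exact absurd (hyx.trans hzx.symm) (G.ne_of_adj hyz)
  · subst hyx; exact (hκ z _ hyz).symm
  · subst hzx; exact hκ y _ hyz.symm
  · exact f.valid hyz

end Coloring

section Critical

variable {V : Type} {G : SimpleGraph V} {s : Set V} {n : ℕ}

/-- `G[s]` is `(n + 1)`-vertex-critical. -/
def IsVertexCritical (G : SimpleGraph V) (n : ℕ) (s : Set V) : Prop :=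
  ¬(G.induce s).Colorable n ∧ ∀ x ∈ s, (G.induce (s \ {x})).Colorable n

theorem exists_isVertexCritical_subset [Finite V] (h : ¬(G.induce s).Colorable n) :
    ∃ t ⊆ s, G.IsVertexCritical n t := by
  obtain ⟨t, hts, hmin⟩ :=
    exists_minimal_le_of_wellFoundedLT (fun t : Set V ↦ ¬(G.induce t).Colorable n) s h
  refine ⟨t, hts, hmin.prop, fun x hx ↦ ?_⟩
  by_contra hnc
  exact (hmin.le_of_le hnc Set.sdiff_subset hx).2 rfl

namespace IsVertexCritical

theorem nonempty (h : G.IsVertexCritical n s) : s.Nonempty :=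
  nonempty_of_not_colorable_induce h.1

theorem chromaticNumber_eq (h : G.IsVertexCritical n s) :
    (G.induce s).chromaticNumber = n + 1 := by
  obtain ⟨x, hx⟩ := h.nonempty
  have hsingle : (G.induce {x}).Colorable 1 :=
    IsIndepSet.colorable_induce (Set.pairwise_singleton x _) one_pos
  have hsucc := colorable_induce_union (h.2 x hx) hsingle
  rw [Set.sdiff_union_self, Set.union_singleton, Set.insert_eq_of_mem hx] at hsucc
  exact chromaticNumber_eq_iff_colorable_not_colorable.2 ⟨hsucc, h.1⟩

theorem le_ncard_neighborSet (h : G.IsVertexCritical n s) (hs : s.Finite) (x : s) :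
    n ≤ ((G.induce s).neighborSet x).ncard := by
  classical
  obtain _ | k := n
  · exact Nat.zero_le _
  by_contra! hlt
  have := hs.to_subtype
  obtain ⟨f⟩ := h.2 x x.2
  let color : s → Fin (k + 1) := fun w ↦ if hw : w.1 ∈ s \ {x.1} then f ⟨w, hw⟩ else 0
  obtain ⟨κ, hκ⟩ : ∃ κ, κ ∉ color '' (G.induce s).neighborSet x := by
    by_contra! hall
    have := calc k + 1 = (Set.univ : Set (Fin (k + 1))).ncard := by simp
      _ ≤ (color '' (G.induce s).neighborSet x).ncard :=
          Set.ncard_le_ncard (fun κ _ ↦ hall κ) (Set.toFinite _)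
      _ ≤ ((G.induce s).neighborSet x).ncard := Set.ncard_image_le (Set.toFinite _)
    omega
  refine h.1 (colorable_induce_of_forall_adj_ne f κ fun y hy hxy hfy ↦ hκ ⟨⟨y, hy.1⟩, hxy, ?_⟩)
  simp [color, hfy, show y ≠ x.1 from hy.2]

theorem nonDegenerate (h : G.IsVertexCritical n s) (hs : s.Finite) :
    NonDegenerate (G.induce s) := fun x ↦ by
  rw [h.chromaticNumber_eq]
  exact_mod_cast Nat.add_le_add_right (h.le_ncard_neighborSet hs x) 1

theorem liberal (h : G.IsVertexCritical n s) : Liberal (G.induce s) := by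
  suffices key : ∀ x y : s, x ≠ y → ¬(G.induce s).Adj x y →
      ((G.induce s).neighborSet x \ (G.induce s).neighborSet y).Nonempty from
    fun x y hxy hnadj ↦ ⟨key x y hxy hnadj, key y x hxy.symm fun h ↦ hnadj h.symm⟩
  intro x y hxy hnadj
  by_contra hempty
  rw [Set.not_nonempty_iff_eq_empty, Set.sdiff_eq_empty] at hempty
  obtain ⟨f⟩ := h.2 x x.2
  have hy : y.1 ∈ s \ {x.1} := ⟨y.2, fun h ↦ hxy (Subtype.ext h).symm⟩
  refine h.1 (colorable_induce_of_forall_adj_ne f (f ⟨y, hy⟩) fun z hz hxz ↦ f.valid ?_)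
  exact (hempty (show (G.induce s).Adj x ⟨z, hz.1⟩ from hxz)).symm

end IsVertexCritical

end Critical

section DistLayer

variable {V : Type*} {G : SimpleGraph V} {v x y : V} {i j m n : ℕ}

/-- Vertices not reachable from `v` have `edist = ⊤` and lie in no layer. -/
def distLayer (G : SimpleGraph V) (v : V) (i : ℕ) : Set V :=
  {x | G.edist v x = i}

theorem distLayer_zero : G.distLayer v 0 = {v} := by
  ext x
  rw [Set.mem_singleton_iff, eq_comm]
  exact_mod_cast edist_eq_zero_iff

theorem distLayer_one : G.distLayer v 1 = G.neighborSet v := by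
  ext x
  simp [distLayer, edist_eq_one_iff_adj]

theorem disjoint_distLayer (hij : i ≠ j) : Disjoint (G.distLayer v i) (G.distLayer v j) :=
  Set.disjoint_left.2 fun x hi hj ↦ hij (by exact_mod_cast hi.symm.trans hj)

theorem le_add_one_of_adj_of_mem_distLayer (hx : x ∈ G.distLayer v i)
    (hy : y ∈ G.distLayer v j) (hxy : G.Adj x y) : j ≤ i + 1 := by
  have := G.edist_triangle (u := v) (v := x) (w := y)
  rw [hx, hy, edist_eq_one_iff_adj.2 hxy] at this
  exact_mod_cast this

theorem not_adj_of_mem_distLayer (hx : x ∈ G.distLayer v i) (hy : y ∈ G.distLayer v j)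
    (hij : i + 2 ≤ j) : ¬G.Adj x y := fun hxy ↦
  absurd (le_add_one_of_adj_of_mem_distLayer hx hy hxy) (by omega)

theorem exists_adj_of_mem_distLayer_succ (hx : x ∈ G.distLayer v (i + 1)) :
    ∃ y ∈ G.distLayer v i, G.Adj y x := by
  obtain ⟨p, hp⟩ := exists_walk_of_edist_eq_coe hx
  rw [← Walk.length_reverse] at hp
  generalize p.reverse = r at hp
  cases r with
  | nil => simp at hp
  | @cons _ y _ hxy q =>
    have hq : q.length = i := by simpa using hp
    have hle : G.edist v y ≤ i := by simpa [edist_comm, hq] using G.edist_le q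
    obtain ⟨k, hk⟩ := ENat.ne_top_iff_exists.1 (ne_top_of_le_ne_top (ENat.natCast_ne_top i) hle)
    have hki : k ≤ i := by exact_mod_cast hk ▸ hle
    have hik := le_add_one_of_adj_of_mem_distLayer (G := G) hk.symm hx hxy.symm
    exact ⟨y, show G.edist v y = i by rw [← hk]; congr 1; omega, hxy.symm⟩

theorem supp_connectedComponentMk_eq_iUnion_distLayer :
    (G.connectedComponentMk v).supp = ⋃ i, G.distLayer v i := by
  ext x
  simp only [ConnectedComponent.mem_supp_iff, ConnectedComponent.eq, Set.mem_iUnion, distLayer,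
    Set.mem_ofPred_eq, ← edist_ne_top_iff_reachable, ENat.ne_top_iff_exists, eq_comm]

theorem iUnion_distLayer_eq_even_union_odd :
    ⋃ i, G.distLayer v i = (⋃ i, G.distLayer v (2 * i)) ∪ ⋃ i, G.distLayer v (2 * i + 1) := by
  ext x
  simp only [Set.mem_iUnion, Set.mem_union]
  constructor
  · rintro ⟨i, hi⟩
    obtain ⟨k, rfl | rfl⟩ := Nat.even_or_odd' i
    exacts [.inl ⟨k, hi⟩, .inr ⟨k, hi⟩]
  · rintro (⟨k, hk⟩ | ⟨k, hk⟩)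
    exacts [⟨_, hk⟩, ⟨_, hk⟩]

theorem colorable_connectedComponentMk_of_distLayer
    (heven : ∀ i, (G.induce (G.distLayer v (2 * i))).Colorable m)
    (hodd : ∀ i, (G.induce (G.distLayer v (2 * i + 1))).Colorable n) :
    (G.connectedComponentMk v).toSimpleGraph.Colorable (m + n) := by
  have hsep : ∀ a i j, i ≠ j → ∀ x ∈ G.distLayer v (2 * i + a),
      ∀ y ∈ G.distLayer v (2 * j + a), ¬G.Adj x y := by
    intro a i j hij x hx y hy hxy
    have h₁ := le_add_one_of_adj_of_mem_distLayer hx hy hxy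
    have h₂ := le_add_one_of_adj_of_mem_distLayer hy hx hxy.symm
    omega
  refine Colorable.induce_of_subset
    (supp_connectedComponentMk_eq_iUnion_distLayer.trans iUnion_distLayer_eq_even_union_odd).le
    (colorable_induce_union (colorable_induce_iUnion heven ?_) (colorable_induce_iUnion hodd ?_))
  exacts [hsep 0, hsep 1]

theorem colorable_connectedComponentMk_of_cliqueFree_three {c : ℕ} (htri : G.CliqueFree 3)
    (hc : 0 < c) (h2 : (G.induce (G.distLayer v 2)).Colorable (c + 1))
    (hdeep : ∀ i, 3 ≤ i → (G.induce (G.distLayer v i)).Colorable c) :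
    (G.connectedComponentMk v).toSimpleGraph.Colorable (2 * c + 1) := by
  rw [show 2 * c + 1 = (c + 1) + c by ring]
  refine colorable_connectedComponentMk_of_distLayer (fun i ↦ ?_) (fun i ↦ ?_)
  · rcases i with _ | _ | i
    · rw [Nat.mul_zero, distLayer_zero]
      exact IsIndepSet.colorable_induce (Set.pairwise_singleton v _) (Nat.succ_pos c)
    · exact h2
    · exact (hdeep _ (by omega)).mono (Nat.le_succ c)
  · rcases i with _ | i
    · rw [Nat.mul_zero, Nat.zero_add, distLayer_one]
      exact (G.isIndepSet_neighborSet_of_triangleFree htri v).colorable_induce hc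
    · exact hdeep _ (by omega)

end DistLayer

section Leveling

variable {V : Type} {G : SimpleGraph V} {v : V} {n : ℕ}

theorem isLeveling_three {A B C D : Set V} (hD_ne : D.Nonempty)
    (hAB : Disjoint A B) (hAC : Disjoint A C) (hAD : Disjoint A D)
    (hBC : Disjoint B C) (hBD : Disjoint B D) (hCD : Disjoint C D)
    (hB : ∀ y ∈ B, ∃ x ∈ A, G.Adj x y) (hC : ∀ y ∈ C, ∃ x ∈ B, G.Adj x y)
    (hD : ∀ y ∈ D, ∃ x ∈ C, G.Adj x y)
    (hAC' : ∀ x ∈ A, ∀ y ∈ C, ¬G.Adj x y) (hAD' : ∀ x ∈ A, ∀ y ∈ D, ¬G.Adj x y)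
    (hBD' : ∀ x ∈ B, ∀ y ∈ D, ¬G.Adj x y) :
    IsLeveling G 3 fun i ↦ if i = 0 then A else if i = 1 then B else if i = 2 then C else D := by
  have hC_ne : C.Nonempty := let ⟨_, hy⟩ := hD_ne; let ⟨x, hx, _⟩ := hD _ hy; ⟨x, hx⟩
  have hB_ne : B.Nonempty := let ⟨_, hy⟩ := hC_ne; let ⟨x, hx, _⟩ := hC _ hy; ⟨x, hx⟩
  have hA_ne : A.Nonempty := let ⟨_, hy⟩ := hB_ne; let ⟨x, hx, _⟩ := hB _ hy; ⟨x, hx⟩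
  refine ⟨fun i hi ↦ ?_, fun i j hi hj hij ↦ ?_, fun i hi₁ hi₃ ↦ ?_,
    fun i j hi hj hij x hx y hy hxy ↦ ?_⟩
  · interval_cases i <;> assumption
  · interval_cases i <;> interval_cases j <;>
      first | exact absurd rfl hij | assumption | exact Disjoint.symm ‹_›
  · interval_cases i <;> assumption
  · interval_cases i <;> interval_cases j <;> first | omega | exact absurd hxy (by solve_by_elim)

theorem exists_isLeveling_of_not_colorable_distLayer [Finite V] {i : ℕ} (hi : 3 ≤ i)
    (h : ¬(G.induce (G.distLayer v i)).Colorable n) :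
    ∃ L : ℕ → Set V, IsLeveling G 3 L ∧ G.IsVertexCritical n (L 3) := by
  obtain ⟨b, rfl⟩ : ∃ b, i = b + 3 := ⟨i - 3, by omega⟩
  obtain ⟨T, hT, hcrit⟩ := exists_isVertexCritical_subset h
  have hdisj : ∀ j k, j ≠ k → Disjoint (G.distLayer v j) (G.distLayer v k) :=
    fun _ _ ↦ disjoint_distLayer
  have hgap : ∀ j k, j + 2 ≤ k → ∀ x ∈ G.distLayer v j, ∀ y ∈ G.distLayer v k, ¬G.Adj x y :=
    fun _ _ hjk _ hx _ hy ↦ not_adj_of_mem_distLayer hx hy hjk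
  refine ⟨_, isLeveling_three (A := G.distLayer v b) (B := G.distLayer v (b + 1))
    (C := G.distLayer v (b + 2)) hcrit.nonempty (hdisj _ _ (by omega)) (hdisj _ _ (by omega))
    ((hdisj _ _ (by omega)).mono_right hT) (hdisj _ _ (by omega))
    ((hdisj _ _ (by omega)).mono_right hT) ((hdisj _ _ (by omega)).mono_right hT)
    (fun _ ↦ exists_adj_of_mem_distLayer_succ) (fun _ ↦ exists_adj_of_mem_distLayer_succ)
    (fun _ hy ↦ exists_adj_of_mem_distLayer_succ (hT hy)) (hgap _ _ (by omega))
    (fun x hx y hy ↦ hgap _ _ (by omega) x hx y (hT hy))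
    (fun x hx y hy ↦ hgap _ _ (by omega) x hx y (hT hy)), hcrit⟩

theorem exists_isLeveling_of_not_colorable_distLayer_two [Finite V] (htri : G.CliqueFree 3)
    (h : ¬(G.induce (G.distLayer v 2)).Colorable (n + 1)) :
    ∃ L : ℕ → Set V, IsLeveling G 3 L ∧ G.IsVertexCritical n (L 3) := by
  have hindep := G.isIndepSet_neighborSet_of_triangleFree htri
  obtain ⟨w, hw⟩ := nonempty_of_not_colorable_induce h
  obtain ⟨u, hu, -⟩ := exists_adj_of_mem_distLayer_succ (i := 1) hw
  have hvu : G.Adj v u := by rwa [distLayer_one] at hu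
  have hv : v ∈ G.distLayer v 0 := by simp [distLayer_zero]
  have h' : ¬(G.induce (G.distLayer v 2 \ G.neighborSet u)).Colorable n := fun hc ↦
    h <| (colorable_induce_union hc ((hindep u).colorable_induce one_pos)).induce_of_subset
      (Set.subset_sdiff_union _ _)
  obtain ⟨T, hT, hcrit⟩ := exists_isVertexCritical_subset h'
  refine ⟨_, isLeveling_three (A := {u}) (B := {v})
    (C := G.neighborSet v ∩ {y | ∃ t ∈ T, G.Adj y t}) hcrit.nonempty
    (Set.disjoint_singleton.2 hvu.ne.symm)
    (Set.disjoint_singleton_left.2 fun ⟨_, t, ht, hut⟩ ↦ (hT ht).2 hut)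
    (Set.disjoint_singleton_left.2 fun huT ↦
      Set.disjoint_left.1 (disjoint_distLayer (by norm_num)) hu (hT huT).1)
    (Set.disjoint_singleton_left.2 fun hvv ↦ G.irrefl hvv.1)
    (Set.disjoint_singleton_left.2 fun hvT ↦
      Set.disjoint_left.1 (disjoint_distLayer (by norm_num)) hv (hT hvT).1)
    ((disjoint_distLayer (by norm_num : 1 ≠ 2)).mono (fun y hy ↦ distLayer_one ▸ hy.1)
      fun t ht ↦ (hT ht).1)
    (fun y hy ↦ ⟨u, rfl, hy ▸ hvu.symm⟩) (fun y hy ↦ ⟨v, rfl, hy.1⟩)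
    (fun t ht ↦ ?_) (fun x hx y hy hxy ↦ hindep v (hx ▸ hvu) hy.1 hxy.ne hxy)
    (fun x hx t ht ↦ hx ▸ (hT ht).2)
    (fun x hx t ht ↦ not_adj_of_mem_distLayer (hx ▸ hv) (hT ht).1 le_rfl), hcrit⟩
  obtain ⟨y, hy, hyt⟩ := exists_adj_of_mem_distLayer_succ (hT ht).1
  exact ⟨y, ⟨distLayer_one ▸ hy, t, ht, hyt⟩, hyt⟩

end Leveling

end SimpleGraph

/-- If `G` is finite, triangle-free, and `χ(G) > 2c + 1`, then there is an
`r`-leveling `(L 0, …, L r)` in `G` with `r ≥ 3` such that the subgraph induced on `L r`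
has chromatic number exactly `c + 1` and is non-degenerate and liberal. -/
theorem stmt_7 {V : Type} [Fintype V] (c : ℕ) (hc : 0 < c) (G : SimpleGraph V)
    (htri : G.CliqueFree 3)
    (hchi : (2 * c + 1 : ℕ∞) < G.chromaticNumber) :
    ∃ (r : ℕ) (L : ℕ → Set V), 3 ≤ r ∧ IsLeveling G r L ∧
      (G.induce (L r)).chromaticNumber = (c : ℕ∞) + 1 ∧
      NonDegenerate (G.induce (L r)) ∧
      Liberal (G.induce (L r)) := by
  have hG : ¬G.Colorable (2 * c + 1) := fun h ↦ hchi.not_ge (by exact_mod_cast h.chromaticNumber_le)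
  obtain ⟨C, hC⟩ : ∃ C : G.ConnectedComponent, ¬C.toSimpleGraph.Colorable (2 * c + 1) := by
    by_contra! h
    exact hG (colorable_iff_forall_connectedComponent.2 h)
  induction C using ConnectedComponent.ind with | h v => ?_
  obtain ⟨L, hL, hcrit⟩ : ∃ L : ℕ → Set V, IsLeveling G 3 L ∧ G.IsVertexCritical c (L 3) := by
    by_cases hdeep : ∃ i, 3 ≤ i ∧ ¬(G.induce (G.distLayer v i)).Colorable c
    · obtain ⟨i, hi, hnc⟩ := hdeep
      exact exists_isLeveling_of_not_colorable_distLayer hi hnc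
    · push Not at hdeep
      exact exists_isLeveling_of_not_colorable_distLayer_two htri fun h2 ↦
        hC (colorable_connectedComponentMk_of_cliqueFree_three htri hc h2 hdeep)
  exact ⟨3, L, le_rfl, hL, hcrit.chromaticNumber_eq, hcrit.nonDegenerate (L 3).toFinite,
    hcrit.liberal⟩
end

section
/- Let r ≥ 2 be an integer, let G be a finite triangle-free 4-sunspot-free graph, and let (L_0, …, L_r) be an r-leveling in G. Let H be a hole of length at least 6 in the subgraph induced on L_r and let x ∈ L_{r−1}. Then there is no x-sector of length at most 2 in H. -/
/-!
Let `u` be a neighbour of `x` in `L (r - 2)`; it has no neighbour in `L r`, so none on `H`.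
A sector of length `1` would give a triangle. A sector `h(j-1) h(j) h(j+1)` of length `2` closes
the `4`-cycle `h(j-1) x h(j+1) h(j)`; hanging `h(j-2)`, `u`, `h(j+2)` off `h(j-1)`, `x`, `h(j+1)`
gives a `4`-sunspot, since triangle-freeness keeps `x` away from `h(j±2)` and the length `≥ 6`
keeps `h(j-2)`, `h(j+2)` apart and nonadjacent.
-/

open SimpleGraph

namespace SimpleGraph

theorem cycleGraph_adj_add_right {n : ℕ} [NeZero n] (a b c : Fin n) :
    (cycleGraph n).Adj (a + c) (b + c) ↔ (cycleGraph n).Adj a b := by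
  simp only [cycleGraph_adj', add_sub_add_right_eq_sub]

theorem cycleGraph_adj_castLE_iff {m n : ℕ} (h : m < n) (a b : Fin m) :
    (cycleGraph n).Adj (Fin.castLE h.le a) (Fin.castLE h.le b) ↔ (pathGraph m).Adj a b := by
  have key (a b : Fin m) :
      (Fin.castLE h.le a - Fin.castLE h.le b).val = 1 ↔ a.val = b.val + 1 := by
    have := a.isLt
    rcases le_or_gt (Fin.castLE h.le b) (Fin.castLE h.le a) with hba | hab
    · rw [Fin.sub_val_of_le hba]
      simp only [Fin.le_def, Fin.val_castLE] at hba ⊢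
      omega
    · rw [Fin.coe_sub_iff_lt.mpr hab]
      simp only [Fin.lt_def, Fin.val_castLE] at hab ⊢
      omega
  rw [cycleGraph_adj', pathGraph_adj, key, key]
  omega

def cycleGraph.pathEmbedding {m n : ℕ} [NeZero n] (h : m < n) (c : Fin n) :
    pathGraph m ↪g cycleGraph n where
  toFun a := Fin.castLE h.le a + c
  inj' _ _ hab := Fin.castLE_injective h.le (add_right_cancel hab)
  map_rel_iff' {a b} := (cycleGraph_adj_add_right _ _ c).trans (cycleGraph_adj_castLE_iff h a b)

theorem cycleGraph_adj_iff_eq_sub_one_or_eq_add_one {n : ℕ} [NeZero n] (hn : 2 ≤ n)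
    {u v : Fin n} :
    (cycleGraph n).Adj u v ↔ u = v - 1 ∨ u = v + 1 := by
  obtain ⟨m, rfl⟩ : ∃ m, n = m + 2 := ⟨n - 2, by omega⟩
  rw [adj_comm, ← mem_neighborSet, cycleGraph_neighborSet, Set.mem_insert_iff,
    Set.mem_singleton_iff]

end SimpleGraph

theorem FourSunspotFree.not_adj_adj_of_pathGraph {V : Type} {G : SimpleGraph V}
    (hspot : FourSunspotFree G) (htri : G.CliqueFree 3) (P : pathGraph 5 ↪g G) {x u : V}
    (hxu : G.Adj x u) (hu : ∀ k, ¬ G.Adj u (P k)) : ¬ (G.Adj x (P 1) ∧ G.Adj x (P 3)) := by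
  rintro ⟨hx1, hx3⟩
  have hP (a b : Fin 5) : G.Adj (P a) (P b) ↔ a.val + 1 = b.val ∨ b.val + 1 = a.val :=
    P.map_rel_iff.trans pathGraph_adj
  have not_adj_of_adj {a b c : V} (hab : G.Adj a b) (hac : G.Adj a c) : ¬ G.Adj b c :=
    fun hbc => G.isIndepSet_neighborSet_of_triangleFree htri a hab hac hbc.ne hbc
  have hx0 : ¬ G.Adj x (P 0) := not_adj_of_adj hx1.symm ((hP 1 0).mpr (by decide))
  have hx2 : ¬ G.Adj x (P 2) := not_adj_of_adj hx1.symm ((hP 1 2).mpr (by decide))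
  have hx4 : ¬ G.Adj x (P 4) := not_adj_of_adj hx3.symm ((hP 3 4).mpr (by decide))
  have hxP (k : Fin 5) : x ≠ P k := fun h => hu k (h ▸ hxu.symm)
  have huP (k : Fin 5) : u ≠ P k := by
    rintro rfl
    fin_cases k <;>
      first
      | exact hu 1 ((hP _ _).mpr (by decide))
      | exact hu 2 ((hP _ _).mpr (by decide))
      | exact hu 3 ((hP _ _).mpr (by decide))
  have hu' (k : Fin 5) : ¬ G.Adj (P k) u := fun h => hu k h.symm
  have hPx (k : Fin 5) : P k ≠ x := (hxP k).symm
  have hPu (k : Fin 5) : P k ≠ u := (huP k).symm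
  refine hspot (P 1) x (P 3) (P 2) (P 0) u (P 4) ?_
  simp [IsFourSunspot, hP, hx1.symm, hx3, hxu, hx0, hx2, hx4, hu, hu', hxP, huP, hPx, hPu, hxu.ne]

open Fin.CommRing in
theorem noSectorLenLe2_of_adj_of_forall_not_adj {V : Type} {G : SimpleGraph V}
    (hspot : FourSunspotFree G) (htri : G.CliqueFree 3) (H : Hole G) (hH : 6 ≤ H.len)
    {x u : V} (hxu : G.Adj x u) (hu : ∀ i, ¬ G.Adj u (H.emb i)) : NoSectorLenLe2 G H x := by
  have : NeZero H.len := ⟨by omega⟩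
  refine ⟨fun i j hij ⟨hi, hj⟩ => G.isIndepSet_neighborSet_of_triangleFree htri x hi hj
    (H.emb.injective.ne hij.ne) (H.emb.map_rel_iff.mpr hij), ?_⟩
  rintro i j k hij hjk hik ⟨hi, -, hk⟩
  have h5 : 5 < H.len := by omega
  let P := H.emb.comp (cycleGraph.pathEmbedding h5 (j - 2))
  have hP1 : P 1 = H.emb (j - 1) := congrArg H.emb <| by
    change Fin.castLE h5.le 1 + (j - 2) = j - 1
    rw [show Fin.castLE h5.le (1 : Fin 5) = 1 from
      Fin.ext (by simp [Nat.mod_eq_of_lt (show 1 < H.len by omega)])]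
    ring
  have hP3 : P 3 = H.emb (j + 1) := congrArg H.emb <| by
    change Fin.castLE h5.le 3 + (j - 2) = j + 1
    rw [show Fin.castLE h5.le (3 : Fin 5) = 3 from
      Fin.ext (by simp [Nat.mod_eq_of_lt (show 3 < H.len by omega)])]
    ring
  have key := hspot.not_adj_adj_of_pathGraph htri P hxu fun _ => hu _
  rw [hP1, hP3] at key
  have hnbr (w : Fin H.len) : (cycleGraph H.len).Adj w j ↔ w = j - 1 ∨ w = j + 1 :=
    cycleGraph_adj_iff_eq_sub_one_or_eq_add_one (by omega)
  rcases (hnbr i).mp hij with rfl | rfl <;> rcases (hnbr k).mp hjk.symm with rfl | rfl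
  · exact hik rfl
  · exact key ⟨hi, hk⟩
  · exact key ⟨hk, hi⟩
  · exact hik rfl

theorem IsLeveling.not_adj_of_add_two_le {V : Type} {G : SimpleGraph V} {r : ℕ} {L : ℕ → Set V}
    (hL : IsLeveling G r L) {i j : ℕ} (hij : i + 2 ≤ j) (hj : j ≤ r) {u v : V} (hu : u ∈ L i)
    (hv : v ∈ L j) : ¬ G.Adj u v := fun h => by
  rcases hL.2.2.2 i j (by omega) hj (by omega) u hu v hv h with h | h <;> omega

theorem stmt_8_general {V : Type} (r : ℕ) (hr : 2 ≤ r) (G : SimpleGraph V)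
    (htri : G.CliqueFree 3)
    (hspot : FourSunspotFree G)
    (L : ℕ → Set V) (hL : IsLeveling G r L)
    (H : Hole G) (hHsub : H.verts ⊆ L r) (hHlen : 6 ≤ H.len)
    (x : V) (hx : x ∈ L (r - 1)) :
    NoSectorLenLe2 G H x := by
  obtain ⟨u, hu, hux⟩ := hL.2.2.1 (r - 1) (by omega) (by omega) x hx
  refine noSectorLenLe2_of_adj_of_forall_not_adj hspot htri H hHlen hux.symm fun i => ?_
  exact hL.not_adj_of_add_two_le (by omega) le_rfl hu (hHsub ⟨i, rfl⟩)

/-- Let `r ≥ 2`, let `G` be finite, triangle-free and `4`-sunspot-free, let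
`(L 0, …, L r)` be an `r`-leveling in `G`, let `H` be a hole of length at least `6` in the
subgraph induced on `L r`, and let `x ∈ L (r-1)`. Then there is no `x`-sector of length at
most `2` in `H`. -/
theorem stmt_8 {V : Type} [Fintype V] (r : ℕ) (hr : 2 ≤ r) (G : SimpleGraph V)
    (htri : G.CliqueFree 3)
    (hspot : FourSunspotFree G)
    (L : ℕ → Set V) (hL : IsLeveling G r L)
    (H : Hole G) (hHsub : H.verts ⊆ L r) (hHlen : 6 ≤ H.len)
    (x : V) (hx : x ∈ L (r - 1)) :
    NoSectorLenLe2 G H x :=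
  stmt_8_general r hr G htri hspot L hL H hHsub hHlen x hx
end

section
/- Let r ≥ 3 be an integer, let G be a finite triangle-free 4-sunspot-free graph, and let (L_0, …, L_r) be an r-leveling in G such that the subgraph induced on L_r is liberal. Let H be a hole of length at least 6 in the subgraph induced on L_r and let x ∈ L_r \ V(H). Then there is no x-sector of length at most 2 in H. -/
/-!
Let `a b c` be the sector (`x ~ a`, `x ~ c`, `x ≁ b`) and `a' a b c c'` the surrounding hole
vertices. Descending two levels from `b` gives `u ~ b` and `t ~ u` with `t` anticomplete to the
last level, which contains the hole, `x`, and the vertices `y ~ x`, `y ≁ b` and `z ~ b`, `z ≁ x`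
provided by liberality. However these vertices are joined, a 4-sunspot appears, triangle-freeness
supplying most of its non-edges: `u ~ a'` is excluded by the square `b u a' a`, and likewise
`u ~ c'`; so if `u ≁ x`, the square `a b c x` with pendants `a'`, `u`, `c'` is a sunspot, while
if `u ~ x`, the square `b u x a` forces `y ~ z`, after which the square `u x a b` carries a
sunspot, with pendants `t`, `y`, `a'` when `z ~ a'` and `a'` (at `a`), `z`, `t` otherwise.
-/

open SimpleGraph

theorem SimpleGraph.CliqueFree.not_adj_of_adj_of_adj {V : Type} {G : SimpleGraph V}
    (h : G.CliqueFree 3) {a b c : V} (hab : G.Adj a b) (hac : G.Adj a c) : ¬G.Adj b c := by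
  classical
  exact fun hbc => h {a, b, c} (is3Clique_triple_iff.2 ⟨hab, hac, hbc⟩)

/-- Triangle-freeness supplies the other seven non-edges and the distinctness of the vertices. -/
theorem isFourSunspot_of_cliqueFree {V : Type} {G : SimpleGraph V} (htri : G.CliqueFree 3)
    {x₁ x₂ x₃ x₄ y₁ y₂ y₃ : V}
    (e12 : G.Adj x₁ x₂) (e23 : G.Adj x₂ x₃) (e34 : G.Adj x₃ x₄) (e41 : G.Adj x₄ x₁)
    (f1 : G.Adj x₁ y₁) (f2 : G.Adj x₂ y₂) (f3 : G.Adj x₃ y₃)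
    (n13 : ¬G.Adj x₁ x₃) (n24 : ¬G.Adj x₂ x₄)
    (n3y1 : ¬G.Adj x₃ y₁) (n1y3 : ¬G.Adj x₁ y₃) (n4y2 : ¬G.Adj x₄ y₂)
    (g12 : ¬G.Adj y₁ y₂) (g13 : ¬G.Adj y₁ y₃) (g23 : ¬G.Adj y₂ y₃) :
    IsFourSunspot G x₁ x₂ x₃ x₄ y₁ y₂ y₃ := by
  have n2y1 := htri.not_adj_of_adj_of_adj e12 f1
  have n4y1 := htri.not_adj_of_adj_of_adj e41.symm f1
  have n1y2 := htri.not_adj_of_adj_of_adj e12.symm f2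
  have n3y2 := htri.not_adj_of_adj_of_adj e23 f2
  have n2y3 := htri.not_adj_of_adj_of_adj e23.symm f3
  have n4y3 := htri.not_adj_of_adj_of_adj e34 f3
  refine ⟨?_, e12, e23, e34, e41, f1, f2, f3, n13, n24, n1y2, n1y3, n2y1, n2y3, n3y1, n3y2,
    n4y1, n4y2, n4y3, g12, g13, g23⟩
  simp only [List.nodup_cons, List.mem_cons, List.not_mem_nil, or_false, not_or, List.nodup_nil,
    and_true, not_false_eq_true]
  and_intros <;> rintro rfl <;> simp_all [adj_comm]

open Fin.CommRing

namespace SimpleGraph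

variable {V : Type} {G : SimpleGraph V}

/-- Indexed by `ℤ` so that a window around a hole vertex can be read in both directions. -/
def IsLocallyInducedPath (G : SimpleGraph V) (d : ℕ) (w : ℤ → V) : Prop :=
  ∀ a b : ℤ, a < b → b ≤ a + d → (G.Adj (w a) (w b) ↔ b = a + 1)

namespace IsLocallyInducedPath

variable {d : ℕ} {w : ℤ → V}

theorem reverse (hw : G.IsLocallyInducedPath d w) :
    G.IsLocallyInducedPath d (fun k => w (-k)) := fun a b hab hbd => by
  rw [adj_comm, hw (-b) (-a) (by omega) (by omega)]
  omega

theorem map {V' : Type} {G' : SimpleGraph V'} (hw : G.IsLocallyInducedPath d w) (f : G ↪g G') :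
    G'.IsLocallyInducedPath d (f ∘ w) := fun a b hab hbd => by
  simp only [Function.comp_apply, f.map_adj_iff, hw a b hab hbd]

theorem adj (hw : G.IsLocallyInducedPath d w) (a b : ℤ) (h : |a - b| = 1 := by norm_num)
    (hd : 1 ≤ d := by norm_num) : G.Adj (w a) (w b) := by
  rcases abs_eq (zero_le_one' ℤ) |>.1 h with h | h
  · exact ((hw b a (by omega) (by omega)).2 (by omega)).symm
  · exact (hw a b (by omega) (by omega)).2 (by omega)

theorem not_adj (hw : G.IsLocallyInducedPath d w) (a b : ℤ)
    (h : 2 ≤ |a - b| ∧ |a - b| ≤ d := by norm_num) : ¬G.Adj (w a) (w b) := by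
  rcases abs_cases (a - b) with ⟨habs, _⟩ | ⟨habs, _⟩ <;> rw [habs] at h
  · rw [adj_comm, hw b a (by omega) (by omega)]
    omega
  · rw [hw a b (by omega) (by omega)]
    omega

end IsLocallyInducedPath

theorem cycleGraph_isLocallyInducedPath {n d : ℕ} [NeZero n] (hd : d + 2 ≤ n) (j : Fin n) :
    (cycleGraph n).IsLocallyInducedPath d (fun k => j + k) := fun a b hab hbd => by
  have hsub : ∀ c e : ℤ, (j + c) - (j + e) = ((c - e : ℤ) : Fin n) := fun c e => by
    push_cast; ring
  have hpos : (b - a) % n = b - a := Int.emod_eq_of_lt (by omega) (by omega)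
  have hneg : (a - b) % n = n - (b - a) := by
    rw [← Int.add_emod_right, Int.emod_eq_of_lt] <;> omega
  dsimp only
  rw [cycleGraph_adj', hsub, hsub, Fin.val_intCast, Fin.val_intCast, hpos, hneg]
  omega

theorem cycleGraph_adj_eq_add_one_or_eq_sub_one {n : ℕ} [NeZero n] {i j : Fin n}
    (h : (cycleGraph n).Adj i j) : j = i + 1 ∨ j = i - 1 := by
  obtain _ | _ | m := n
  · exact i.elim0
  · exact (cycleGraph_one_adj h).elim
  · have h' : j ∈ (cycleGraph (m + 2)).neighborSet i := h
    rw [cycleGraph_neighborSet] at h'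
    simpa [or_comm] using h'

end SimpleGraph

instance Hole.neZero_len {V : Type} {G : SimpleGraph V} (H : Hole G) : NeZero H.len :=
  ⟨by have := H.four_le; omega⟩

theorem Hole.isLocallyInducedPath {V : Type} {G : SimpleGraph V} (H : Hole G) (hH : 6 ≤ H.len)
    (j : Fin H.len) : G.IsLocallyInducedPath 4 (fun k => H.emb (j + k)) :=
  (cycleGraph_isLocallyInducedPath (by omega) j).map H.emb

theorem Liberal.exists_adj_not_adj_of_induce {V : Type} {G : SimpleGraph V} {S : Set V}
    (h : Liberal (G.induce S)) {a b : V} (ha : a ∈ S) (hb : b ∈ S) (hab : a ≠ b)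
    (hnab : ¬G.Adj a b) : ∃ c ∈ S, G.Adj a c ∧ ¬G.Adj b c := by
  obtain ⟨⟨c, hc⟩, hac, hbc⟩ := (h ⟨a, ha⟩ ⟨b, hb⟩ (by simpa) (by simpa)).1
  exact ⟨c, hc, hac, hbc⟩

theorem IsLeveling.exists_adj_adj_forall_not_adj {V : Type} {G : SimpleGraph V} {r : ℕ}
    {L : ℕ → Set V} (hL : IsLeveling G r L) (hr : 2 ≤ r) {v : V} (hv : v ∈ L r) :
    ∃ u t, G.Adj u v ∧ G.Adj t u ∧ ∀ w ∈ L r, ¬G.Adj t w := by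
  obtain ⟨-, -, hdown, hcons⟩ := hL
  obtain ⟨u, hu, huv⟩ := hdown r (by omega) le_rfl v hv
  obtain ⟨t, ht, htu⟩ := hdown (r - 1) (by omega) (by omega) u hu
  refine ⟨u, t, huv, htu, fun w hw htw => ?_⟩
  rcases hcons (r - 1 - 1) r (by omega) le_rfl (by omega) t ht w hw htw with h | h <;> omega

namespace SimpleGraph.IsLocallyInducedPath

variable {V : Type} {G : SimpleGraph V} {w : ℤ → V} {u t : V}

theorem not_adj_neg_two (htri : G.CliqueFree 3) (hspot : FourSunspotFree G)
    (hw : G.IsLocallyInducedPath 4 w) (hu : G.Adj u (w 0)) (ht : G.Adj t u)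
    (htw : ∀ k, ¬G.Adj t (w k)) : ¬G.Adj u (w (-2)) := fun hua' =>
  hspot (w 0) u (w (-2)) (w (-1)) (w 1) t (w (-3)) <|
    isFourSunspot_of_cliqueFree htri hu.symm hua' (hw.adj (-2) (-1))
    (hw.adj (-1) 0) (hw.adj 0 1) ht.symm (hw.adj (-2) (-3)) (hw.not_adj 0 (-2))
    (htri.not_adj_of_adj_of_adj hu.symm (hw.adj 0 (-1))) (hw.not_adj (-2) 1) (hw.not_adj 0 (-3))
    (fun h => htw _ h.symm) (fun h => htw _ h.symm) (hw.not_adj 1 (-3)) (htw _)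

theorem false_of_sector (htri : G.CliqueFree 3) (hspot : FourSunspotFree G)
    (hw : G.IsLocallyInducedPath 4 w) {x y z : V}
    (hxa : G.Adj x (w (-1))) (hxc : G.Adj x (w 1)) (hxb : ¬G.Adj x (w 0))
    (hu : G.Adj u (w 0)) (ht : G.Adj t u) (htw : ∀ k, ¬G.Adj t (w k))
    (hy : G.Adj x y) (hyb : ¬G.Adj (w 0) y) (hty : ¬G.Adj t y)
    (hz : G.Adj (w 0) z) (hzx : ¬G.Adj x z) (htz : ¬G.Adj t z) : False := by
  have hua' := hw.not_adj_neg_two htri hspot hu ht htw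
  have huc' : ¬G.Adj u (w 2) := by
    simpa using hw.reverse.not_adj_neg_two htri hspot (by simpa using hu) ht (fun k => htw (-k))
  have hua := htri.not_adj_of_adj_of_adj hu.symm (hw.adj 0 (-1))
  by_cases hux : G.Adj u x
  · have hzy : G.Adj z y := by
      by_contra hzy
      exact hspot (w 0) u x (w (-1)) z t y <| isFourSunspot_of_cliqueFree htri hu.symm hux hxa
        (hw.adj (-1) 0) hz ht.symm hy (fun h => hxb h.symm) hua hzx hyb (fun h => htw _ h.symm)
        (fun h => htz h.symm) hzy hty
    by_cases hza' : G.Adj z (w (-2))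
    · exact hspot u x (w (-1)) (w 0) t y (w (-2)) <|
        isFourSunspot_of_cliqueFree htri hux hxa (hw.adj (-1) 0) hu.symm ht.symm hy
        (hw.adj (-1) (-2)) hua hxb (fun h => htw _ h.symm) hua' hyb hty (htw _)
        (htri.not_adj_of_adj_of_adj hzy hza')
    · exact hspot (w (-1)) (w 0) u x (w (-2)) z t <|
        isFourSunspot_of_cliqueFree htri (hw.adj (-1) 0) hu.symm hux hxa (hw.adj (-1) (-2)) hz
        ht.symm (fun h => hua h.symm) (fun h => hxb h.symm) hua' (fun h => htw _ h.symm) hzx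
        (fun h => hza' h.symm) (fun h => htw _ h.symm) (fun h => htz h.symm)
  · exact hspot (w (-1)) (w 0) (w 1) x (w (-2)) u (w 2) <|
      isFourSunspot_of_cliqueFree htri (hw.adj (-1) 0) (hw.adj 0 1) hxc.symm hxa
      (hw.adj (-1) (-2)) hu.symm (hw.adj 1 2) (hw.not_adj (-1) 1) (fun h => hxb h.symm)
      (hw.not_adj 1 (-2)) (hw.not_adj (-1) 2) (fun h => hux h.symm) (fun h => hua' h.symm)
      (hw.not_adj (-2) 2) huc'

end SimpleGraph.IsLocallyInducedPath

theorem stmt_9_general {V : Type} (r : ℕ) (hr : 3 ≤ r) (G : SimpleGraph V)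
    (htri : G.CliqueFree 3)
    (hspot : FourSunspotFree G)
    (L : ℕ → Set V) (hL : IsLeveling G r L)
    (hlib : Liberal (G.induce (L r)))
    (H : Hole G) (hHsub : H.verts ⊆ L r) (hHlen : 6 ≤ H.len)
    (x : V) (hx : x ∈ L r \ H.verts) :
    NoSectorLenLe2 G H x := by
  obtain ⟨hxL, hxH⟩ := hx
  refine ⟨fun i j hij ⟨hi, hj⟩ => htri.not_adj_of_adj_of_adj hi hj (H.emb.map_adj_iff.2 hij), ?_⟩
  rintro i j k hij hjk hik ⟨hi, hj, hk⟩
  have hHL : ∀ i, H.emb i ∈ L r := fun i => hHsub ⟨i, rfl⟩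
  have hxj : x ≠ H.emb j := fun h => hxH ⟨j, h.symm⟩
  obtain ⟨u, t, hu, ht, htL⟩ := hL.exists_adj_adj_forall_not_adj (by omega) (hHL j)
  obtain ⟨y, hyL, hy, hyj⟩ := hlib.exists_adj_not_adj_of_induce hxL (hHL j) hxj hj
  obtain ⟨z, hzL, hz, hzx⟩ :=
    hlib.exists_adj_not_adj_of_induce (hHL j) hxL hxj.symm (fun h => hj h.symm)
  have sector (hxa : G.Adj x (H.emb (j - 1))) (hxc : G.Adj x (H.emb (j + 1))) : False := by
    refine (H.isLocallyInducedPath hHlen j).false_of_sector htri hspot ?_ ?_ ?_ ?_ ht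
      (fun _ => htL _ (hHL _)) hy ?_ (htL _ hyL) ?_ hzx (htL _ hzL) <;>
    simpa [← sub_eq_add_neg]
  rcases cycleGraph_adj_eq_add_one_or_eq_sub_one hij.symm with rfl | rfl <;>
    rcases cycleGraph_adj_eq_add_one_or_eq_sub_one hjk with rfl | rfl
  · exact hik rfl
  · exact sector hk hi
  · exact sector hi hk
  · exact hik rfl

/-- Let `r ≥ 3`, let `G` be finite, triangle-free and `4`-sunspot-free, let
`(L 0, …, L r)` be an `r`-leveling in `G` such that the subgraph induced on `L r` is liberal,
let `H` be a hole of length at least `6` in the subgraph induced on `L r`, and let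
`x ∈ L r \ V(H)`. Then there is no `x`-sector of length at most `2` in `H`. -/
theorem stmt_9 {V : Type} [Fintype V] (r : ℕ) (hr : 3 ≤ r) (G : SimpleGraph V)
    (htri : G.CliqueFree 3)
    (hspot : FourSunspotFree G)
    (L : ℕ → Set V) (hL : IsLeveling G r L)
    (hlib : Liberal (G.induce (L r)))
    (H : Hole G) (hHsub : H.verts ⊆ L r) (hHlen : 6 ≤ H.len)
    (x : V) (hx : x ∈ L r \ H.verts) :
    NoSectorLenLe2 G H x :=
  stmt_9_general r hr G htri hspot L hL hlib H hHsub hHlen x hx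
end

section
/- Let G be a finite triangle-free 4-sunspot-free graph that is both liberal and flapless. Let H be a hole of length at least 6 in G, let Φ be an H-flare in G, let h, h' ∈ V(H) be distinct, and let x ∈ Φ[h]. If h and h' are adjacent, then x and h' have no common neighbor in V(G) \ V(H). -/
open SimpleGraph

/-- Let `G` be a finite triangle-free `4`-sunspot-free graph that is liberal
and flapless, `H` a hole of length at least `6`, `Φ` an `H`-flare, `h = H.emb i` and
`h' = H.emb j` distinct vertices of `H`, and `x ∈ Φ[h]`. If `h` and `h'` are adjacent, then
`x` and `h'` have no common neighbor in `V(G) \ V(H)`. -/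
theorem stmt_12 {V : Type} [Fintype V] (G : SimpleGraph V)
    (htri : G.CliqueFree 3)
    (hspot : FourSunspotFree G)
    (hlib : Liberal G) (hflap : Flapless G)
    (H : Hole G) (hHlen : 6 ≤ H.len)
    (Φ : Fin H.len → Set V) (hΦ : IsFlare G H Φ)
    (i j : Fin H.len) (hij : i ≠ j)
    (x : V) (hx : x ∈ Φ i ∪ {H.emb i})
    (hadj : G.Adj (H.emb i) (H.emb j)) :
    ¬ ∃ z : V, z ∉ H.verts ∧ G.Adj x z ∧ G.Adj (H.emb j) z := by
  classical
  rintro ⟨z, hzH, hxz, hjz⟩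
  have tri : ∀ a b c : V, G.Adj a b → G.Adj a c → G.Adj b c → False := by
    intro a b c hab hac hbc
    exact htri {a, b, c} (SimpleGraph.is3Clique_triple_iff.mpr ⟨hab, hac, hbc⟩)
  rcases hx with hx | hx
  · -- x ∈ Φ i : build a flap
    have hxmem := hΦ.subset_nbhd i hx
    have hix : G.Adj (H.emb i) x := hxmem.1
    have hxH : x ∉ H.verts := hxmem.2
    have hiv : H.emb i ∈ H.verts := ⟨i, rfl⟩
    have hjv : H.emb j ∈ H.verts := ⟨j, rfl⟩
    -- non-edges
    have hxj : ¬ G.Adj x (H.emb j) := fun h => tri _ _ _ hix hadj h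
    have hiz : ¬ G.Adj (H.emb i) z := fun h => tri _ _ _ hadj h hjz
    -- distinctness
    have d01 : H.emb i ≠ H.emb j := hadj.ne
    have d02 : H.emb i ≠ z := fun h => hzH (h ▸ hiv)
    have d03 : H.emb i ≠ x := hix.ne
    have d12 : H.emb j ≠ z := hjz.ne
    have d13 : H.emb j ≠ x := fun h => hxH (h ▸ hjv)
    have d23 : z ≠ x := fun h => hxz.ne h.symm
    set f : Fin 4 → V := ![H.emb i, H.emb j, z, x] with hf
    have hinj : Function.Injective f := by
      intro a b hab
      fin_cases a <;> fin_cases b <;>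
        first
        | rfl
        | exact absurd hab d01 | exact absurd hab.symm d01
        | exact absurd hab d02 | exact absurd hab.symm d02
        | exact absurd hab d03 | exact absurd hab.symm d03
        | exact absurd hab d12 | exact absurd hab.symm d12
        | exact absurd hab d13 | exact absurd hab.symm d13
        | exact absurd hab d23 | exact absurd hab.symm d23
    have hrel : ∀ a b : Fin 4, G.Adj (f a) (f b) ↔ (SimpleGraph.cycleGraph 4).Adj a b := by
      intro a b
      fin_cases a <;> fin_cases b <;>
        first
        | exact iff_of_false (G.irrefl) (by decide)
        | exact iff_of_true hadj (by decide)
        | exact iff_of_true hadj.symm (by decide)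
        | exact iff_of_true hjz (by decide)
        | exact iff_of_true hjz.symm (by decide)
        | exact iff_of_true hxz (by decide)
        | exact iff_of_true hxz.symm (by decide)
        | exact iff_of_true hix (by decide)
        | exact iff_of_true hix.symm (by decide)
        | exact iff_of_false hxj (by decide)
        | exact iff_of_false (fun h => hxj h.symm) (by decide)
        | exact iff_of_false hiz (by decide)
        | exact iff_of_false (fun h => hiz h.symm) (by decide)
    let F : Hole G := ⟨4, le_refl 4, ⟨⟨f, hinj⟩, hrel _ _⟩⟩
    have heF : s(H.emb i, H.emb j) ∈ F.edges := by
      refine ⟨(0 : Fin 4), (1 : Fin 4), ?_, ?_⟩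
      · show (SimpleGraph.cycleGraph 4).Adj 0 1
        decide
      · rfl
    have heH : s(H.emb i, H.emb j) ∈ H.edges :=
      ⟨i, j, H.emb.map_rel_iff.mp hadj, rfl⟩
    exact hflap H hHlen F rfl _ heF heH
  · -- x = H.emb i : triangle
    rcases hx with rfl
    exact tri _ _ _ hadj hxz hjz
end

section
/- Let G be a finite triangle-free 4-sunspot-free graph that is both liberal and flapless. Let H be a hole of length at least 6 in G, let Φ be an H-flare in G, let h, h' ∈ V(H) be distinct, and let x ∈ Φ[h]. If h and h' are non-adjacent, then x and h' have at most one common neighbor in V(G) \ V(H). -/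
open SimpleGraph

/-!
Let `z₁ ≠ z₂` be common neighbours of `x` and `c = h'` outside `H`. Triangle-freeness makes
`x` and `c` non-adjacent, so liberality gives `w ∼ x` with `w ≁ c`; flaplessness gives a
hole-neighbour `a` of `c` with `w ≁ a`. Liberality applied to `z₁, z₂` gives
`p ∈ N(z₁) \ N(z₂)` and `q ∈ N(z₂) \ N(z₁)`. If `w ≁ p`, then `(x, z₁, c, z₂; w, p, a)` is a
4-sunspot; hence `w ∼ p`, and likewise `w ∼ q`. But then `z₁ p w q z₂ c` is a hole of length 6
and `x z₁ c z₂` is a flap of it.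
-/

namespace SimpleGraph

variable {α V : Type*} {G : SimpleGraph V}

theorem CliqueFree.not_adj_of_adj_of_adj_s13 (htri : G.CliqueFree 3) ⦃a b c : V⦄
    (hab : G.Adj a b) (hac : G.Adj a c) : ¬ G.Adj b c := fun hbc =>
  isIndepSet_neighborSet_of_triangleFree _ htri a hab hac (G.ne_of_adj hbc) hbc

theorem exists_ne_adj_cycleGraph {n : ℕ} (hn : 3 ≤ n) (j : Fin n) :
    ∃ a b, a ≠ b ∧ (cycleGraph n).Adj a j ∧ (cycleGraph n).Adj b j := by
  obtain ⟨m, rfl⟩ := Nat.exists_eq_add_of_le' hn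
  have hdeg : 1 < (cycleGraph (m + 3)).degree j := by rw [cycleGraph_degree_three_le]; norm_num
  obtain ⟨a, ha, b, hb, hab⟩ := Finset.one_lt_card.mp hdeg
  exact ⟨a, b, hab, ((mem_neighborFinset _ _ _).mp ha).symm,
    ((mem_neighborFinset _ _ _).mp hb).symm⟩

theorem injective_of_adj_iff {S : SimpleGraph α} {f : α → V}
    (hf : ∀ u v, G.Adj (f u) (f v) ↔ S.Adj u v)
    (hS : ∀ u v, u ≠ v → ¬ S.Adj u v → ∃ w, S.Adj w u ∧ ¬ S.Adj w v) :
    Function.Injective f := by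
  intro u v huv
  by_contra hne
  by_cases hadj : S.Adj u v
  · exact G.loopless.irrefl (f v) (huv ▸ (hf u v).mpr hadj)
  · obtain ⟨w, hwu, hwv⟩ := hS u v hne hadj
    exact hwv ((hf w v).mp (huv ▸ (hf w u).mpr hwu))

end SimpleGraph

namespace Hole

variable {V : Type} {G : SimpleGraph V} (H : Hole G)

theorem adj_of_mem_edges {a b : V} (h : s(a, b) ∈ H.edges) : G.Adj a b := by
  obtain ⟨i, j, hij, he⟩ := h
  rcases Sym2.eq_iff.mp he with ⟨rfl, rfl⟩ | ⟨rfl, rfl⟩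
  · exact H.emb.map_rel_iff.mpr hij
  · exact (H.emb.map_rel_iff.mpr hij).symm

theorem mem_verts_of_mem_edges {a b : V} (h : s(a, b) ∈ H.edges) : a ∈ H.verts := by
  obtain ⟨i, j, -, he⟩ := h
  rcases Sym2.eq_iff.mp he with ⟨rfl, -⟩ | ⟨rfl, -⟩
  exacts [⟨i, rfl⟩, ⟨j, rfl⟩]

theorem exists_ne_mem_edges {c : V} (hc : c ∈ H.verts) :
    ∃ a b, a ≠ b ∧ s(a, c) ∈ H.edges ∧ s(b, c) ∈ H.edges := by
  obtain ⟨j, rfl⟩ := hc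
  obtain ⟨a, b, hab, ha, hb⟩ := exists_ne_adj_cycleGraph (by linarith [H.four_le]) j
  exact ⟨H.emb a, H.emb b, H.emb.injective.ne hab, ⟨a, j, ha, rfl⟩, ⟨b, j, hb, rfl⟩⟩

theorem exists_of_adj_iff {n : ℕ} (hn : 4 ≤ n) {f : Fin n → V} (hf : Function.Injective f)
    (hadj : ∀ u v, G.Adj (f u) (f v) ↔ (cycleGraph n).Adj u v) {u v : Fin n}
    (huv : (cycleGraph n).Adj u v) : ∃ F : Hole G, F.len = n ∧ s(f u, f v) ∈ F.edges :=
  ⟨⟨n, hn, ⟨⟨f, hf⟩, hadj _ _⟩⟩, rfl, u, v, huv, rfl⟩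

theorem exists_four_of_cliqueFree (htri : G.CliqueFree 3) {a b c d : V}
    (hab : G.Adj a b) (hbc : G.Adj b c) (hcd : G.Adj c d) (hda : G.Adj d a)
    (hac : a ≠ c) (hbd : b ≠ d) :
    ∃ F : Hole G, F.len = 4 ∧ s(b, c) ∈ F.edges := by
  have hnac := htri.not_adj_of_adj_of_adj_s13 hab.symm hbc
  have hnbd := htri.not_adj_of_adj_of_adj_s13 hbc.symm hcd
  have hinj : Function.Injective ![a, b, c, d] := by
    intro u v huv
    fin_cases u <;> fin_cases v <;> simp_all [G.ne_of_adj]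
  have hadj (u v : Fin 4) :
      G.Adj (![a, b, c, d] u) (![a, b, c, d] v) ↔ (cycleGraph 4).Adj u v := by
    fin_cases u <;> fin_cases v <;> simp [cycleGraph_adj] <;> grind [SimpleGraph.adj_symm]
  exact exists_of_adj_iff le_rfl hinj hadj (by decide : (cycleGraph 4).Adj 1 2)

theorem exists_six_of_cliqueFree (htri : G.CliqueFree 3) {v₀ v₁ v₂ v₃ v₄ v₅ : V}
    (h₀₁ : G.Adj v₀ v₁) (h₁₂ : G.Adj v₁ v₂) (h₂₃ : G.Adj v₂ v₃) (h₃₄ : G.Adj v₃ v₄)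
    (h₄₅ : G.Adj v₄ v₅) (h₅₀ : G.Adj v₅ v₀)
    (h₀₃ : ¬ G.Adj v₀ v₃) (h₁₄ : ¬ G.Adj v₁ v₄) (h₂₅ : ¬ G.Adj v₂ v₅) :
    ∃ F : Hole G, F.len = 6 ∧ s(v₀, v₅) ∈ F.edges := by
  have h₀₂ := htri.not_adj_of_adj_of_adj_s13 h₀₁.symm h₁₂
  have h₁₃ := htri.not_adj_of_adj_of_adj_s13 h₁₂.symm h₂₃
  have h₂₄ := htri.not_adj_of_adj_of_adj_s13 h₂₃.symm h₃₄
  have h₃₅ := htri.not_adj_of_adj_of_adj_s13 h₃₄.symm h₄₅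
  have h₄₀ := htri.not_adj_of_adj_of_adj_s13 h₄₅.symm h₅₀
  have h₅₁ := htri.not_adj_of_adj_of_adj_s13 h₅₀.symm h₀₁
  have hadj (u v : Fin 6) : G.Adj (![v₀, v₁, v₂, v₃, v₄, v₅] u) (![v₀, v₁, v₂, v₃, v₄, v₅] v) ↔
      (cycleGraph 6).Adj u v := by
    fin_cases u <;> fin_cases v <;> simp [cycleGraph_adj] <;> grind [SimpleGraph.adj_symm]
  exact exists_of_adj_iff (by norm_num) (injective_of_adj_iff hadj (by decide)) hadj
    (by decide : (cycleGraph 6).Adj 0 5)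

end Hole

namespace Flapless

variable {V : Type} {G : SimpleGraph V}

theorem false_of_cycle_four (htri : G.CliqueFree 3) (hflap : Flapless G) {H : Hole G}
    (hH : 6 ≤ H.len) {a b c d : V} (hbc : s(b, c) ∈ H.edges) (hab : G.Adj a b)
    (hcd : G.Adj c d) (hda : G.Adj d a) (hac : a ≠ c) (hbd : b ≠ d) : False := by
  obtain ⟨F, hF, hbcF⟩ :=
    Hole.exists_four_of_cliqueFree htri hab (H.adj_of_mem_edges hbc) hcd hda hac hbd
  exact hflap H hH F hF _ hbcF hbc

theorem exists_mem_edges_not_adj (htri : G.CliqueFree 3) (hflap : Flapless G) {H : Hole G}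
    (hH : 6 ≤ H.len) {c w : V} (hc : c ∈ H.verts) (hwc : w ≠ c) :
    ∃ a, s(a, c) ∈ H.edges ∧ ¬ G.Adj w a := by
  obtain ⟨a, b, hab, ha, hb⟩ := H.exists_ne_mem_edges hc
  by_contra! hwab
  exact hflap.false_of_cycle_four htri hH (Sym2.eq_swap ▸ ha) (hwab a ha)
    (H.adj_of_mem_edges hb).symm (hwab b hb).symm hwc hab

end Flapless

section

variable {V : Type} {G : SimpleGraph V}

theorem isFourSunspot_of_cliqueFree_s13 (htri : G.CliqueFree 3) {x₁ x₂ x₃ x₄ y₁ y₂ y₃ : V}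
    (h₁₂ : G.Adj x₁ x₂) (h₂₃ : G.Adj x₂ x₃) (h₃₄ : G.Adj x₃ x₄) (h₄₁ : G.Adj x₄ x₁)
    (h₁ : G.Adj x₁ y₁) (h₂ : G.Adj x₂ y₂) (h₃ : G.Adj x₃ y₃) (h₁₃ : x₁ ≠ x₃) (h₂₄ : x₂ ≠ x₄)
    (hx₁y₃ : ¬ G.Adj x₁ y₃) (hx₃y₁ : ¬ G.Adj x₃ y₁) (hx₄y₂ : ¬ G.Adj x₄ y₂)
    (hy₁₂ : ¬ G.Adj y₁ y₂) (hy₁₃ : ¬ G.Adj y₁ y₃) (hy₂₃ : ¬ G.Adj y₂ y₃) :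
    IsFourSunspot G x₁ x₂ x₃ x₄ y₁ y₂ y₃ := by
  have tri := htri.not_adj_of_adj_of_adj_s13
  have hx₁x₃ := tri h₁₂.symm h₂₃
  have hx₂x₄ := tri h₂₃.symm h₃₄
  have hx₁y₂ := tri h₁₂.symm h₂
  have hx₂y₁ := tri h₁₂ h₁
  have hx₂y₃ := tri h₂₃.symm h₃
  have hx₃y₂ := tri h₂₃ h₂
  have hx₄y₁ := tri h₄₁.symm h₁
  have hx₄y₃ := tri h₃₄ h₃
  clear tri
  refine ⟨?_, h₁₂, h₂₃, h₃₄, h₄₁, h₁, h₂, h₃, hx₁x₃, hx₂x₄, hx₁y₂, hx₁y₃, hx₂y₁, hx₂y₃, hx₃y₁,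
    hx₃y₂, hx₄y₁, hx₄y₂, hx₄y₃, hy₁₂, hy₁₃, hy₂₃⟩
  -- a 4-sunspot has no two non-adjacent vertices with equal neighbourhoods, so the seven are distinct
  simp only [List.nodup_cons, List.mem_cons, List.not_mem_nil, or_false, List.nodup_nil, and_true,
    not_or]
  and_intros <;> intro h <;> grind [SimpleGraph.adj_symm, SimpleGraph.irrefl]

theorem IsFlare.ne_emb {H : Hole G} {Φ : Fin H.len → Set V} (hΦ : IsFlare G H Φ)
    {i j : Fin H.len} (hij : i ≠ j) {x : V} (hx : x ∈ Φ i ∪ {H.emb i}) : x ≠ H.emb j := by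
  rcases hx with hx | rfl
  · exact fun he => (hΦ.subset_nbhd i hx).2 ⟨j, he.symm⟩
  · exact H.emb.injective.ne hij

theorem adj_of_fourSunspotFree (htri : G.CliqueFree 3) (hspot : FourSunspotFree G)
    (hflap : Flapless G) {H : Hole G} (hH : 6 ≤ H.len) {x c z z' w p a : V}
    (hxc : x ≠ c) (hzz' : z ≠ z') (hz : z ∉ H.verts)
    (hxz : G.Adj x z) (hxz' : G.Adj x z') (hcz : G.Adj c z) (hcz' : G.Adj c z')
    (hxw : G.Adj x w) (hcw : ¬ G.Adj c w) (hac : s(a, c) ∈ H.edges) (hwa : ¬ G.Adj w a)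
    (hzp : G.Adj z p) (hz'p : ¬ G.Adj z' p) : G.Adj w p := by
  have haz : a ≠ z := fun h => hz (h ▸ H.mem_verts_of_mem_edges hac)
  have hca := (H.adj_of_mem_edges hac).symm
  have hxa : ¬ G.Adj x a := fun h =>
    hflap.false_of_cycle_four htri hH hac h hcz hxz.symm hxc haz
  have hpa : ¬ G.Adj p a := fun h =>
    hflap.false_of_cycle_four htri hH hac h hcz hzp (by rintro rfl; exact hz'p hcz'.symm) haz
  by_contra hwp
  exact hspot x z c z' w p a <| isFourSunspot_of_cliqueFree_s13 htri hxz hcz.symm hcz' hxz'.symm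
    hxw hzp hca hxc hzz' hxa hcw hz'p hwp hwa hpa

end

theorem stmt_13_general {V : Type} (G : SimpleGraph V)
    (htri : G.CliqueFree 3)
    (hspot : FourSunspotFree G)
    (hlib : Liberal G) (hflap : Flapless G)
    (H : Hole G) (hHlen : 6 ≤ H.len)
    (Φ : Fin H.len → Set V) (hΦ : IsFlare G H Φ)
    (i j : Fin H.len) (hij : i ≠ j)
    (x : V) (hx : x ∈ Φ i ∪ {H.emb i}) :
    {z : V | z ∉ H.verts ∧ G.Adj x z ∧ G.Adj (H.emb j) z}.Subsingleton := by
  rintro z₁ ⟨hz₁, hxz₁, hcz₁⟩ z₂ ⟨hz₂, hxz₂, hcz₂⟩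
  by_contra hne
  set c := H.emb j
  have hxc : x ≠ c := hΦ.ne_emb hij hx
  have hnxc := htri.not_adj_of_adj_of_adj_s13 hxz₁.symm hcz₁.symm
  obtain ⟨w, hxw, hcw⟩ : ∃ w, G.Adj x w ∧ ¬ G.Adj c w := (hlib x c hxc hnxc).1
  obtain ⟨a, hac, hwa⟩ := hflap.exists_mem_edges_not_adj htri hHlen
    (show c ∈ H.verts from Set.mem_range_self j) fun h => hnxc (h ▸ hxw)
  obtain ⟨⟨p, hz₁p, hz₂p⟩, ⟨q, hz₂q, hz₁q⟩⟩ :=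
    hlib z₁ z₂ hne (htri.not_adj_of_adj_of_adj_s13 hxz₁ hxz₂)
  have hwp := adj_of_fourSunspotFree htri hspot hflap hHlen hxc hne hz₁ hxz₁ hxz₂ hcz₁ hcz₂
    hxw hcw hac hwa hz₁p hz₂p
  have hwq := adj_of_fourSunspotFree htri hspot hflap hHlen hxc (Ne.symm hne) hz₂ hxz₂ hxz₁ hcz₂
    hcz₁ hxw hcw hac hwa hz₂q hz₁q
  obtain ⟨F, hF, hz₁c⟩ := Hole.exists_six_of_cliqueFree htri hz₁p hwp.symm hwq hz₂q.symm
    hcz₂.symm hcz₁ hz₁q (fun h => hz₂p h.symm) (fun h => hcw h.symm)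
  exact hflap.false_of_cycle_four htri hF.ge hz₁c hxz₁ hcz₂ hxz₂.symm hxc hne

/-- Let `G` be a finite triangle-free `4`-sunspot-free graph that is liberal
and flapless, `H` a hole of length at least `6`, `Φ` an `H`-flare, `h = H.emb i` and
`h' = H.emb j` distinct vertices of `H`, and `x ∈ Φ[h]`. If `h` and `h'` are non-adjacent,
then `x` and `h'` have at most one common neighbor in `V(G) \ V(H)`. -/
theorem stmt_13 {V : Type} [Fintype V] (G : SimpleGraph V)
    (htri : G.CliqueFree 3)
    (hspot : FourSunspotFree G)
    (hlib : Liberal G) (hflap : Flapless G)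
    (H : Hole G) (hHlen : 6 ≤ H.len)
    (Φ : Fin H.len → Set V) (hΦ : IsFlare G H Φ)
    (i j : Fin H.len) (hij : i ≠ j)
    (x : V) (hx : x ∈ Φ i ∪ {H.emb i})
    (hnadj : ¬ G.Adj (H.emb i) (H.emb j)) :
    {z : V | z ∉ H.verts ∧ G.Adj x z ∧ G.Adj (H.emb j) z}.Subsingleton :=
  stmt_13_general G htri hspot hlib hflap H hHlen Φ hΦ i j hij x hx
end

section
/- Let G be a finite triangle-free graph that is flapless, let H be a hole of length at least 6 in G, let Φ be an H-flare in G, let h, h' ∈ V(H) be distinct and non-adjacent, let x ∈ Φ[h], and suppose x and h' have two distinct common neighbors z, z' ∈ V(G) \ V(H). Then there are vertices y, y' ∈ V(H) such that x, y, h', y' are all distinct, xy and h'y' are edges of G, and the sets {x, y} and {h', y'} are anticomplete in G. -/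
open SimpleGraph

/-!
Triangle-freeness and flaplessness give the key fact: if `x ≠ h'` have a common neighbour `z`
outside `H`, then `x` is non-adjacent to both neighbours `w` of `h'` on `H`, since otherwise
`x z h' w` would be a `4`-hole sharing the edge `h'w` with `H`.
If `x ∈ Φ(h)`, take `y = h` and for `y'` a neighbour of `h'` on `H` non-adjacent to `h`; it
exists because `H` has length at least `5`. If `x = h`, take for `y, y'` the predecessors of
`h, h'` on `H`. In both cases the required distinctness follows from the edges `xy`, `h'y'` and
the four non-edges between `{x, y}` and `{h', y'}`.
-/

section CycleGraph

variable {n : ℕ} [NeZero n]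

lemma cycleGraph_adj_iff_eq_add_one (hn : 2 ≤ n) {u v : Fin n} :
    (cycleGraph n).Adj u v ↔ u = v + 1 ∨ v = u + 1 := by
  have h1 : (1 : Fin n).val = 1 := by rw [Fin.val_one', Nat.mod_eq_of_lt (by omega)]
  simp only [cycleGraph_adj', ← h1, ← Fin.ext_iff, sub_eq_iff_eq_add']

lemma cycleGraph_adj_add_one (hn : 2 ≤ n) (v : Fin n) : (cycleGraph n).Adj v (v + 1) :=
  (cycleGraph_adj_iff_eq_add_one hn).2 (Or.inr rfl)

lemma cycleGraph_adj_sub_one (hn : 2 ≤ n) (v : Fin n) : (cycleGraph n).Adj v (v - 1) :=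
  (cycleGraph_adj_iff_eq_add_one hn).2 (Or.inl (sub_add_cancel v 1).symm)

lemma cycleGraph_adj_sub_sub_iff (u v d : Fin n) :
    (cycleGraph n).Adj (u - d) (v - d) ↔ (cycleGraph n).Adj u v := by
  simp only [cycleGraph_adj', sub_sub_sub_cancel_right]

open Fin.CommRing in
lemma exists_cycleGraph_adj_not_adj (hn : 5 ≤ n) {i j : Fin n} (hij : i ≠ j) :
    ∃ k, (cycleGraph n).Adj j k ∧ ¬(cycleGraph n).Adj i k := by
  have hn2 : 2 ≤ n := by omega
  by_cases hi : i = j + 1 + 1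
  · refine ⟨j - 1, cycleGraph_adj_sub_one hn2 j, ?_⟩
    rw [cycleGraph_adj_iff_eq_add_one hn2, sub_add_cancel]
    rintro (h | h)
    · exact hij h
    · have h4 : (4 : Fin n) = 0 := by linear_combination -hi - h
      have h4val := congrArg Fin.val h4
      simp only [Fin.coe_ofNat_eq_mod, Nat.zero_mod] at h4val
      rw [Nat.mod_eq_of_lt (by omega)] at h4val
      omega
  · refine ⟨j + 1, cycleGraph_adj_add_one hn2 j, ?_⟩
    rw [cycleGraph_adj_iff_eq_add_one hn2]
    rintro (h | h)
    · exact hi h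
    · exact hij (add_right_cancel h).symm

end CycleGraph

section Graph

variable {V : Type} {G : SimpleGraph V}

lemma exists_hole_four_of_square {a b c d : V} (hab : G.Adj a b) (hbc : G.Adj b c)
    (hcd : G.Adj c d) (hda : G.Adj d a) (hac : ¬G.Adj a c) (hbd : ¬G.Adj b d)
    (hac' : a ≠ c) (hbd' : b ≠ d) :
    ∃ F : Hole G, F.len = 4 ∧ s(a, b) ∈ F.edges := by
  have hinj : Function.Injective ![a, b, c, d] := by
    intro p q hpq
    fin_cases p <;> fin_cases q <;>
      simp_all [hab.ne, hbc.ne, hcd.ne, hda.ne, hab.ne.symm, hbc.ne.symm, hcd.ne.symm,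
        hda.ne.symm, hac'.symm, hbd'.symm]
  have hca : ¬G.Adj c a := fun h => hac h.symm
  have hdb : ¬G.Adj d b := fun h => hbd h.symm
  have hadj : ∀ p q, G.Adj (![a, b, c, d] p) (![a, b, c, d] q) ↔ (cycleGraph 4).Adj p q := by
    intro p q
    fin_cases p <;> fin_cases q <;>
      simp [hab, hbc, hcd, hda, hab.symm, hbc.symm, hcd.symm, hda.symm, hac, hbd, hca, hdb] <;>
      decide
  exact ⟨⟨4, le_rfl, ⟨⟨_, hinj⟩, hadj _ _⟩⟩, rfl, 0, 1,
    show (cycleGraph 4).Adj 0 1 by decide, rfl⟩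

lemma Flapless.not_adj_of_common_neighbor (htri : G.CliqueFree 3) (hflap : Flapless G)
    {H : Hole G} (hH : 6 ≤ H.len) {x z : V} {j w : Fin H.len} (hz : z ∉ H.verts)
    (hxz : G.Adj x z) (hzj : G.Adj z (H.emb j)) (hxj : x ≠ H.emb j)
    (hjw : (cycleGraph H.len).Adj j w) :
    ¬G.Adj x (H.emb w) := by
  intro hxw
  have hjw' : G.Adj (H.emb j) (H.emb w) := H.emb.map_adj_iff.2 hjw
  have hzw : z ≠ H.emb w := fun h => hz ⟨w, h.symm⟩
  have hjx : ¬G.Adj (H.emb j) x :=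
    isIndepSet_neighborSet_of_triangleFree G htri z hzj hxz.symm hxj.symm
  have hwz : ¬G.Adj (H.emb w) z :=
    isIndepSet_neighborSet_of_triangleFree G htri (H.emb j) hjw' hzj.symm hzw.symm
  obtain ⟨F, hF, hedge⟩ :=
    exists_hole_four_of_square hjw' hxw.symm hxz hzj hjx hwz hxj.symm hzw.symm
  exact hflap H hH F hF _ hedge ⟨j, w, hjw, rfl⟩

lemma nodup_and_anticomplete_of_not_adj {a b c d : V} (hab : G.Adj a b) (hcd : G.Adj c d)
    (hac : ¬G.Adj a c) (had : ¬G.Adj a d) (hbc : ¬G.Adj b c) (hbd : ¬G.Adj b d) :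
    [a, b, c, d].Nodup ∧ Anticomplete G {a, b} {c, d} := by
  have hac' : a ≠ c := by rintro rfl; exact hbc hab.symm
  have had' : a ≠ d := by rintro rfl; exact hbd hab.symm
  have hbc' : b ≠ c := by rintro rfl; exact hac hab
  have hbd' : b ≠ d := by rintro rfl; exact had hab
  refine ⟨by simp [hab.ne, hcd.ne, hac', had', hbc', hbd'], ?_, ?_⟩
  · simp [hac'.symm, had'.symm, hbc'.symm, hbd'.symm]
  · simp [hac, had, hbc, hbd]

end Graph

theorem stmt_14_general {V : Type} (G : SimpleGraph V)
    (htri : G.CliqueFree 3)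
    (hflap : Flapless G)
    (H : Hole G) (hHlen : 6 ≤ H.len)
    (Φ : Fin H.len → Set V) (hΦ : IsFlare G H Φ)
    (i j : Fin H.len) (hij : i ≠ j)
    (x : V) (hx : x ∈ Φ i ∪ {H.emb i})
    (hnadj : ¬ G.Adj (H.emb i) (H.emb j))
    (z : V) (hz : z ∉ H.verts)
    (hz1 : G.Adj x z) (hz2 : G.Adj (H.emb j) z) :
    ∃ y y' : V, y ∈ H.verts ∧ y' ∈ H.verts ∧
      [x, y, H.emb j, y'].Nodup ∧
      G.Adj x y ∧ G.Adj (H.emb j) y' ∧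
      Anticomplete G {x, y} {H.emb j, y'} := by
  have : NeZero H.len := ⟨by omega⟩
  have hxj : x ≠ H.emb j := by
    rcases hx with hx | rfl
    · exact fun h => (hΦ.subset_nbhd i hx).2 ⟨j, h.symm⟩
    · exact fun h => hij (H.emb.injective h)
  suffices ∃ a b, G.Adj x (H.emb a) ∧ (cycleGraph H.len).Adj j b ∧
      ¬G.Adj (H.emb a) (H.emb j) ∧ ¬G.Adj (H.emb a) (H.emb b) by
    obtain ⟨a, b, hxa, hjb, haj, hab⟩ := this
    obtain ⟨hnodup, hanti⟩ := nodup_and_anticomplete_of_not_adj hxa (H.emb.map_adj_iff.2 hjb)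
      (isIndepSet_neighborSet_of_triangleFree G htri z hz1.symm hz2.symm hxj)
      (hflap.not_adj_of_common_neighbor htri hHlen hz hz1 hz2.symm hxj hjb) haj hab
    exact ⟨_, _, ⟨a, rfl⟩, ⟨b, rfl⟩, hnodup, hxa, H.emb.map_adj_iff.2 hjb, hanti⟩
  rcases hx with hx | rfl
  · obtain ⟨k, hjk, hik⟩ := exists_cycleGraph_adj_not_adj (by omega) hij
    exact ⟨i, k, (hΦ.subset_nbhd i hx).1.symm, hjk, hnadj, H.emb.map_adj_iff.not.2 hik⟩
  · have hn : 2 ≤ H.len := by omega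
    refine ⟨i - 1, j - 1, H.emb.map_adj_iff.2 (cycleGraph_adj_sub_one hn i),
      cycleGraph_adj_sub_one hn j, fun h => ?_, ?_⟩
    · exact hflap.not_adj_of_common_neighbor htri hHlen hz hz2 hz1.symm hxj.symm
        (cycleGraph_adj_sub_one hn i) h.symm
    · rw [H.emb.map_adj_iff, cycleGraph_adj_sub_sub_iff, ← H.emb.map_adj_iff]
      exact hnadj

/-- Let `G` be a finite triangle-free flapless graph, `H` a hole of length at
least `6`, `Φ` an `H`-flare, `h = H.emb i` and `h' = H.emb j` distinct non-adjacent vertices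
of `H`, `x ∈ Φ[h]`, and suppose `x, h'` have two distinct common neighbors `z, z' ∉ V(H)`.
Then there are `y, y' ∈ V(H)` such that `x, y, h', y'` are all distinct, `xy, h'y' ∈ E(G)`,
and `{x, y}` and `{h', y'}` are anticomplete in `G`. -/
theorem stmt_14 {V : Type} [Fintype V] (G : SimpleGraph V)
    (htri : G.CliqueFree 3)
    (hflap : Flapless G)
    (H : Hole G) (hHlen : 6 ≤ H.len)
    (Φ : Fin H.len → Set V) (hΦ : IsFlare G H Φ)
    (i j : Fin H.len) (hij : i ≠ j)
    (x : V) (hx : x ∈ Φ i ∪ {H.emb i})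
    (hnadj : ¬ G.Adj (H.emb i) (H.emb j))
    (z z' : V) (hzz' : z ≠ z') (hz : z ∉ H.verts) (hz' : z' ∉ H.verts)
    (hz1 : G.Adj x z) (hz2 : G.Adj (H.emb j) z)
    (hz'1 : G.Adj x z') (hz'2 : G.Adj (H.emb j) z') :
    ∃ y y' : V, y ∈ H.verts ∧ y' ∈ H.verts ∧
      [x, y, H.emb j, y'].Nodup ∧
      G.Adj x y ∧ G.Adj (H.emb j) y' ∧
      Anticomplete G {x, y} {H.emb j, y'} :=
  stmt_14_general G htri hflap H hHlen Φ hΦ i j hij x hx hnadj z hz hz1 hz2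
end
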